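/- arXiv:1906.06258 — 7 statements merged into one kernel-verified Lean document; each statement's English description precedes it below -/
import Mathlib

section
/- Let s₁ and s₂ be rationals with 0 < s₂ < s₁ < 1. Write d₀, d₁, …, d_{λ+1} for the denominators (in lowest terms) of the terms of the minimal unimodular chain from s₁ to s₂; write d⁽¹⁾₀, …, d⁽¹⁾_{λ₁+1} for the denominators of the terms of the minimal unimodular chain from s₁ to −1; and write d⁽²⁾₀, …, d⁽²⁾_{λ₂+1} for the denominators of the terms of the minimal unimodular chain from 1 − s₂ to −1. Let l₁ and l₂, with 0 ≤ l_j < max(1, λ_j) for j = 1, 2, be maximal such that d⁽¹⁾_{l₁} = d⁽²⁾_{l₂} (such a pair exists, and it is well defined since the denominators d⁽ʲ⁾₀ > d⁽ʲ⁾₁ > ⋯ > d⁽ʲ⁾_{λ_j} are strictly decreasing so each value occurs at most once). Then d_i = d⁽¹⁾_i for all 1 ≤ i ≤ l₁, and d_{λ+1−i} = d⁽²⁾_i for all 1 ≤ i ≤ l₂. -/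
/-- `q 0, q 1, …, q n` is a unimodular chain from `t` down to `t'`:
a strictly decreasing sequence of rationals starting at `t` and ending at `t'`
such that consecutive terms `mᵢ/dᵢ > m_{i+1}/d_{i+1}` (in lowest terms)
satisfy `mᵢ·d_{i+1} − m_{i+1}·dᵢ = 1`. -/
def IsUnimodChain (q : ℕ → ℚ) (n : ℕ) (t t' : ℚ) : Prop :=
  q 0 = t ∧ q n = t' ∧
  (∀ i, i < n → q (i + 1) < q i) ∧
  (∀ i, i < n →
    (q i).num * ((q (i + 1)).den : ℤ) - (q (i + 1)).num * ((q i).den : ℤ) = 1)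

/-- A unimodular chain is minimal if no interior term is the Farey mediant
of its two neighbours. -/
def IsMinimalUnimodChain (q : ℕ → ℚ) (n : ℕ) (t t' : ℚ) : Prop :=
  IsUnimodChain q n t t' ∧
  ∀ i, 1 ≤ i → i < n →
    ¬ ((q i).num = (q (i - 1)).num + (q (i + 1)).num ∧
       (q i).den = (q (i - 1)).den + (q (i + 1)).den)

/-!
Along a minimal unimodular chain the denominators are convex: `d_{i-1} + d_{i+1} = k d_i` with
`k ≥ 2`, since `k = 1` is the mediant case. So the chain from `s₁` to `s₂` first descends from
`s₁` through successive lower Stern–Brocot parents to a term `t` of least denominator, and then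
climbs through upper parents to `s₂`. Parents are unique, hence the descent is the beginning of
the chain from `s₁` to `-1`, and after the reflection `x ↦ 1 - x` the reversed climb is the
beginning of the chain from `1 - s₂` to `-1`; the two reach `t` and `1 - t`, of equal
denominator. Beyond these points the two chains run through the lower and the upper ancestors
of `t`, whose denominators are pairwise distinct, so `(l₁, l₂)` is exactly the position of `t`.
-/

def fareyDet (x y : ℚ) : ℤ := x.num * y.den - y.num * x.den

/-- `y` is the nearest Stern–Brocot ancestor of `x` lying below `x`. -/
def IsLowerParent (x y : ℚ) : Prop := fareyDet x y = 1 ∧ y.den < x.den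

/-- `y` is the nearest Stern–Brocot ancestor of `x` lying above `x`. -/
def IsUpperParent (x y : ℚ) : Prop := fareyDet y x = 1 ∧ y.den < x.den

namespace Rat

variable {x : ℚ}

lemma exists_eq_mul_num_den {a b : ℤ} (h : a * x.den = b * x.num) :
    ∃ j : ℤ, a = j * x.num ∧ b = j * x.den := by
  obtain ⟨u, v, huv⟩ := x.isCoprime_num_den
  exact ⟨u * a + v * b, by linear_combination (-a) * huv + v * h,
    by linear_combination (-b) * huv - u * h⟩

@[simp] lemma den_one_sub (x : ℚ) : (1 - x).den = x.den := by simp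

lemma two_le_den_of_pos_of_lt_one (h0 : 0 < x) (h1 : x < 1) : 2 ≤ x.den := by
  by_contra! h
  have hden : x.den = 1 := by have := x.den_pos; omega
  rw [← Rat.coe_int_num_of_den_eq_one hden] at h0 h1
  have h0 : 0 < x.num := by exact_mod_cast h0
  have h1 : x.num < 1 := by exact_mod_cast h1
  omega

end Rat

section Farey

variable {x y z : ℚ}

lemma fareyDet_cast (x y : ℚ) : (fareyDet x y : ℚ) = (x - y) * x.den * y.den := by
  simp only [fareyDet, Int.cast_sub, Int.cast_mul, Int.cast_natCast, ← Rat.mul_den_eq_num]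
  ring

lemma fareyDet_one_sub (x y : ℚ) : fareyDet (1 - x) (1 - y) = fareyDet y x := by
  have h : (fareyDet (1 - x) (1 - y) : ℚ) = fareyDet y x := by
    rw [fareyDet_cast, fareyDet_cast, Rat.den_one_sub, Rat.den_one_sub]
    ring
  exact_mod_cast h

lemma isLowerParent_one_sub : IsLowerParent (1 - x) (1 - y) ↔ IsUpperParent x y := by
  simp [IsLowerParent, IsUpperParent, fareyDet_one_sub]

lemma isUpperParent_one_sub : IsUpperParent (1 - x) (1 - y) ↔ IsLowerParent x y := by
  simpa using (isLowerParent_one_sub (x := 1 - x) (y := 1 - y)).symm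

lemma IsLowerParent.eq (hy : IsLowerParent x y) (hz : IsLowerParent x z) : y = z := by
  obtain ⟨j, hnum, hden⟩ := Rat.exists_eq_mul_num_den (x := x) (a := y.num - z.num)
    (b := y.den - z.den) (by have := hy.1; have := hz.1; unfold fareyDet at *; linarith)
  have hj : j = 0 := by
    have := hy.2; have := hz.2; have := y.den_pos; have := z.den_pos
    rcases lt_trichotomy j 0 with h | h | h <;> [nlinarith; exact h; nlinarith]
  subst hj
  exact Rat.ext (by linarith) (by omega)

lemma IsLowerParent.den_eq_add {t L U : ℚ} (hL : IsLowerParent t L) (hU : IsUpperParent t U) :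
    t.den = L.den + U.den ∧ fareyDet U L = 1 := by
  obtain ⟨j, hnum, hden⟩ := Rat.exists_eq_mul_num_den (x := t) (a := L.num + U.num)
    (b := L.den + U.den) (by have := hL.1; have := hU.1; unfold fareyDet at *; linarith)
  have hj : j = 1 := by
    have := hL.2; have := hU.2; have := L.den_pos; have := U.den_pos
    rcases lt_trichotomy j 1 with h | h | h
    · nlinarith [show j ≤ 0 by omega]
    · exact h
    · nlinarith [show 2 ≤ j by omega]
  subst hj
  refine ⟨by omega, ?_⟩
  have := hU.1
  unfold fareyDet at this ⊢
  linear_combination this + U.num * hden - U.den * hnum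

lemma den_eq_one_of_fareyDet_eq_one (h : fareyDet x y = 1) (hd : x.den = y.den) :
    x.den = 1 := by
  unfold fareyDet at h
  rw [← hd] at h
  exact_mod_cast Int.eq_one_of_mul_eq_one_right (Int.natCast_nonneg _)
    (by linear_combination h : (x.den : ℤ) * (x.num - y.num) = 1)

lemma fareyDet_ne_one_of_pos_of_neg (hx : 0 < x) (hy : y < 0) : fareyDet x y ≠ 1 := by
  have := Rat.num_pos.mpr hx
  have := Rat.num_neg.mpr hy
  have : (1 : ℤ) ≤ x.den := mod_cast x.den_pos
  have : (1 : ℤ) ≤ y.den := mod_cast y.den_pos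
  unfold fareyDet
  nlinarith

end Farey

section Chain

variable {q : ℕ → ℚ} {n : ℕ} {t t' : ℚ}

lemma IsUnimodChain.fareyDet_eq_one (hq : IsUnimodChain q n t t') {i : ℕ} (hi : i < n) :
    fareyDet (q i) (q (i + 1)) = 1 :=
  hq.2.2.2 i hi

lemma IsUnimodChain.strictAntiOn (hq : IsUnimodChain q n t t') : StrictAntiOn q (Set.Iic n) :=
  strictAntiOn_Iic_of_succ_lt hq.2.2.1

lemma IsUnimodChain.mem_Icc (hq : IsUnimodChain q n t t') {i : ℕ} (hi : i ≤ n) :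
    q i ∈ Set.Icc t' t := by
  have hanti := hq.strictAntiOn.antitoneOn
  constructor
  · simpa [hq.2.1] using hanti hi Set.self_mem_Iic hi
  · simpa [hq.1] using hanti (Set.mem_Iic.2 (Nat.zero_le n)) hi (Nat.zero_le i)

lemma IsUnimodChain.den_succ_ne (hq : IsUnimodChain q n t t') {i : ℕ} (hi : i < n)
    (h2 : 2 ≤ (q i).den) : (q (i + 1)).den ≠ (q i).den := fun h => by
  have := den_eq_one_of_fareyDet_eq_one (hq.fareyDet_eq_one hi) h.symm
  omega

lemma IsMinimalUnimodChain.two_mul_den_le (hq : IsMinimalUnimodChain q n t t') {i : ℕ}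
    (hi : i + 2 ≤ n) : 2 * (q (i + 1)).den ≤ (q i).den + (q (i + 2)).den := by
  obtain ⟨k, hnum, hden⟩ := Rat.exists_eq_mul_num_den (x := q (i + 1))
    (a := (q i).num + (q (i + 2)).num) (b := (q i).den + (q (i + 2)).den) (by
      have := hq.1.fareyDet_eq_one (i := i) (by omega)
      have := hq.1.fareyDet_eq_one (i := i + 1) (by omega)
      unfold fareyDet at *
      linarith)
  have hk1 : k ≠ 1 := by
    rintro rfl
    have hmin : ¬((q (i + 1)).num = (q i).num + (q (i + 2)).num ∧
        (q (i + 1)).den = (q i).den + (q (i + 2)).den) := hq.2 (i + 1) (by omega) (by omega)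
    exact hmin ⟨by linarith, by omega⟩
  have := (q i).den_pos
  have := (q (i + 1)).den_pos
  have hk2 : 2 ≤ k := by
    by_contra! hk2
    nlinarith [show k ≤ 0 by omega]
  zify
  nlinarith

lemma IsMinimalUnimodChain.den_sub_den_le (hq : IsMinimalUnimodChain q n t t') {a b : ℕ}
    (hab : a ≤ b) (hb : b < n) :
    ((q (a + 1)).den : ℤ) - (q a).den ≤ (q (b + 1)).den - (q b).den := by
  induction b, hab using Nat.le_induction with
  | base => exact le_rfl
  | succ b hab ih =>
    have h2 := hq.two_mul_den_le (i := b) (by omega)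
    have := ih (by omega)
    rw [show b + 2 = b + 1 + 1 from rfl] at h2
    omega

/-- Holds because the denominators along a minimal chain are convex. -/
lemma IsMinimalUnimodChain.exists_valley (hq : IsMinimalUnimodChain q n t t')
    (h2 : ∀ i ≤ n, 2 ≤ (q i).den) :
    ∃ c ≤ n, (∀ k < c, IsLowerParent (q k) (q (k + 1))) ∧
      ∀ k, c ≤ k → k < n → IsUpperParent (q (k + 1)) (q k) := by
  classical
  have hex : ∃ c, n ≤ c ∨ (q c).den < (q (c + 1)).den := ⟨n, Or.inl le_rfl⟩
  refine ⟨Nat.find hex, Nat.find_min' hex (Or.inl le_rfl), fun k hk => ?_, fun k hck hk => ?_⟩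
  · have := Nat.find_min hex hk
    push Not at this
    exact ⟨hq.1.fareyDet_eq_one this.1,
      lt_of_le_of_ne this.2 (hq.1.den_succ_ne this.1 (h2 k this.1.le))⟩
  · rcases Nat.find_spec hex with h | h
    · omega
    · exact ⟨hq.1.fareyDet_eq_one hk, by have := hq.den_sub_den_le hck hk; omega⟩

lemma IsUnimodChain.exists_eq_zero (hq : IsUnimodChain q n t t') (ht : 0 < t) (ht' : t' < 0) :
    ∃ m, 0 < m ∧ m < n ∧ q m = 0 := by
  classical
  have hex : ∃ m, q m ≤ 0 := ⟨n, hq.2.1 ▸ ht'.le⟩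
  have hmn : Nat.find hex ≤ n := Nat.find_min' hex (hq.2.1 ▸ ht'.le)
  have hm0 : 0 < Nat.find hex := Nat.pos_of_ne_zero fun h => by
    have := Nat.find_spec hex
    rw [h, hq.1] at this
    linarith
  have hpos : 0 < q (Nat.find hex - 1) := not_le.1 (Nat.find_min hex (by omega))
  have hzero : q (Nat.find hex) = 0 := by
    refine le_antisymm (Nat.find_spec hex) (not_lt.1 fun hneg => ?_)
    refine fareyDet_ne_one_of_pos_of_neg hpos hneg ?_
    simpa [Nat.sub_add_cancel hm0] using hq.fareyDet_eq_one (i := Nat.find hex - 1) (by omega)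
  refine ⟨Nat.find hex, hm0, lt_of_le_of_ne hmn fun h => ?_, hzero⟩
  rw [h, hq.2.1] at hzero
  linarith

lemma IsMinimalUnimodChain.of_neg_one (hq : IsMinimalUnimodChain q n t (-1)) (ht0 : 0 < t)
    (ht1 : t < 1) :
    (q (n - 1)).den = 1 ∧ ∀ k < n - 1, 2 ≤ (q k).den ∧ IsLowerParent (q k) (q (k + 1)) := by
  obtain ⟨m, hm0, hmn, hzero⟩ := hq.1.exists_eq_zero ht0 (by norm_num)
  have hn : q n = -1 := hq.1.2.1
  -- after `0` the chain steps to some `-1/d`; convexity forbids `d ≥ 2` before the end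
  have hlast : m = n - 1 := by
    by_contra hne
    have hlt : m + 1 < n := by omega
    have hneg : -1 < q (m + 1) := by
      simpa [hn] using hq.1.strictAntiOn (Set.mem_Iic.2 hlt.le) Set.self_mem_Iic hlt
    have hlt0 : q (m + 1) < 0 := by
      simpa [hzero] using hq.1.strictAntiOn (Set.mem_Iic.2 hmn.le) (Set.mem_Iic.2 hlt.le)
        (Nat.lt_succ_self m)
    have h2 : 2 ≤ (q (m + 1)).den := by
      simpa using Rat.two_le_den_of_pos_of_lt_one (x := 1 + q (m + 1)) (by linarith)
        (by linarith)
    have hmono := hq.den_sub_den_le (a := m) (b := n - 1) (by omega) (by omega)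
    rw [Nat.sub_add_cancel (by omega), hn, hzero] at hmono
    have := (q (n - 1)).den_pos
    simp only [Rat.neg_den, Rat.den_ofNat, Nat.cast_one] at hmono
    omega
  subst hlast
  refine ⟨by rw [hzero]; rfl, fun k hk => ?_⟩
  have h2 : 2 ≤ (q k).den := by
    refine Rat.two_le_den_of_pos_of_lt_one ?_ ((hq.1.mem_Icc (i := k) (by omega)).2.trans_lt ht1)
    simpa [hzero] using hq.1.strictAntiOn (Set.mem_Iic.2 (by omega)) (Set.mem_Iic.2 hmn.le) hk
  refine ⟨h2, hq.1.fareyDet_eq_one (by omega),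
    lt_of_le_of_ne ?_ (hq.1.den_succ_ne (by omega) h2)⟩
  have hmono := hq.den_sub_den_le (a := k) (b := n - 1) (by omega) (by omega)
  rw [Nat.sub_add_cancel (by omega), hn, hzero] at hmono
  simp only [Rat.neg_den, Rat.den_ofNat, Nat.cast_one] at hmono
  omega

end Chain

section ParentChain

variable {α β : ℕ → ℚ}

lemma rel_update_zero {γ : Type*} {R : γ → γ → Prop} {f : ℕ → γ} {x : γ} {m : ℕ}
    (hf : ∀ k < m, R (f k) (f (k + 1))) (hx : R x (f 1)) :
    ∀ k < m, R (Function.update f 0 x k) (Function.update f 0 x (k + 1)) := by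
  rintro (_ | k) hk
  · simpa using hx
  · simpa using hf (k + 1) hk

lemma strictAntiOn_den_of_isLowerParent {m : ℕ}
    (hα : ∀ k < m, IsLowerParent (α k) (α (k + 1))) :
    StrictAntiOn (fun k => (α k).den) (Set.Iic m) :=
  strictAntiOn_Iic_of_succ_lt fun k hk => (hα k hk).2

lemma strictAntiOn_den_of_isUpperParent {m : ℕ}
    (hβ : ∀ k < m, IsUpperParent (β k) (β (k + 1))) :
    StrictAntiOn (fun k => (β k).den) (Set.Iic m) :=
  strictAntiOn_Iic_of_succ_lt fun k hk => (hβ k hk).2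

/-- Of the two parents of `α 0 = β 0`, the one with the larger denominator is a child of the
other, so one chain can be shortened by one step while the other is extended by that parent. -/
theorem den_ne_of_isLowerParent_of_isUpperParent {i j : ℕ} (h0 : α 0 = β 0)
    (hα : ∀ k < i, IsLowerParent (α k) (α (k + 1)))
    (hβ : ∀ k < j, IsUpperParent (β k) (β (k + 1))) (hi : 1 ≤ i) (hj : 1 ≤ j)
    (h2 : 2 ≤ (α i).den) : (α i).den ≠ (β j).den := by
  obtain ⟨N, hN⟩ : ∃ N, i + j = N := ⟨_, rfl⟩
  induction N generalizing α β i j with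
  | zero => omega
  | succ N ih =>
  have hαi : (α i).den ≤ (α 1).den :=
    (strictAntiOn_den_of_isLowerParent hα).antitoneOn (Set.mem_Iic.2 hi) Set.self_mem_Iic hi
  have hβj : (β j).den ≤ (β 1).den :=
    (strictAntiOn_den_of_isUpperParent hβ).antitoneOn (Set.mem_Iic.2 hj) Set.self_mem_Iic hj
  obtain ⟨hden, hdet⟩ : (α 0).den = (α 1).den + (β 1).den ∧ fareyDet (β 1) (α 1) = 1 :=
    (hα 0 hi).den_eq_add (h0 ▸ hβ 0 hj)
  rcases lt_trichotomy (α 1).den (β 1).den with hlt | heq | hgt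
  · rcases Nat.lt_or_ge j 2 with hj1 | hj2
    · obtain rfl : j = 1 := by omega
      omega
    have := ih (α := Function.update α 0 (β 1)) (β := fun k => β (k + 1)) (j := j - 1)
      (by simp) (rel_update_zero hα ⟨hdet, hlt⟩) (fun k hk => hβ (k + 1) (by omega)) hi
      (by omega) (by rwa [Function.update_of_ne (by omega)]) (by omega)
    rwa [Function.update_of_ne (by omega), Nat.sub_add_cancel (by omega)] at this
  · have h1 : (α 1).den = 1 := by
      have hdet₀ := (hα 0 hi).1
      have h2d : ((α 0).den : ℤ) = 2 * (α 1).den := by omega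
      unfold fareyDet at hdet₀
      exact_mod_cast Int.eq_one_of_mul_eq_one_right (Int.natCast_nonneg _)
        (by linear_combination hdet₀ + (α 1).num * h2d :
          ((α 1).den : ℤ) * ((α 0).num - 2 * (α 1).num) = 1)
    omega
  · rcases Nat.lt_or_ge i 2 with hi1 | hi2
    · obtain rfl : i = 1 := by omega
      omega
    have := ih (α := fun k => α (k + 1)) (β := Function.update β 0 (α 1)) (i := i - 1)
      (by simp) (fun k hk => hα (k + 1) (by omega)) (rel_update_zero hβ ⟨hdet, hgt⟩)
      (by omega) hj (by rwa [Nat.sub_add_cancel (by omega)]) (by omega)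
    rwa [Function.update_of_ne (by omega), Nat.sub_add_cancel (by omega)] at this

lemma lt_and_eq_of_isLowerParent {a m : ℕ} (h0 : α 0 = β 0)
    (hα : ∀ k < a, IsLowerParent (α k) (α (k + 1)))
    (hβ : ∀ k < m, IsLowerParent (β k) (β (k + 1)))
    (hα2 : ∀ k ≤ a, 2 ≤ (α k).den) (hβ1 : (β m).den = 1) : a < m ∧ ∀ k ≤ a, α k = β k := by
  have hagree : ∀ k ≤ min a m, α k = β k := by
    intro k hk
    induction k with
    | zero => exact h0
    | succ k ih =>
      refine (hα k (by omega)).eq ?_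
      rw [ih (by omega)]
      exact hβ k (by omega)
  have ham : a < m := by
    by_contra! h
    have := hα2 m h
    rw [hagree m (by omega), hβ1] at this
    omega
  exact ⟨ham, fun k hk => hagree k (by omega)⟩

lemma eq_of_den_eq_of_isLowerParent {a b m₁ m₂ l₁ l₂ : ℕ}
    (hα : ∀ k < m₁, IsLowerParent (α k) (α (k + 1)))
    (hβ : ∀ k < m₂, IsLowerParent (β k) (β (k + 1)))
    (hab : α a = 1 - β b) (ha : a ≤ l₁) (hb : b ≤ l₂) (hl₁ : l₁ ≤ m₁) (hl₂ : l₂ ≤ m₂)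
    (h2 : 2 ≤ (α l₁).den) (heq : (α l₁).den = (β l₂).den) : l₁ = a ∧ l₂ = b := by
  have hdab : (α a).den = (β b).den := by rw [hab, Rat.den_one_sub]
  have key : l₁ = a ∨ l₂ = b := by
    by_contra! h
    refine den_ne_of_isLowerParent_of_isUpperParent (α := fun k => α (a + k))
      (β := fun k => 1 - β (b + k)) (i := l₁ - a) (j := l₂ - b) (by simpa using hab)
      (fun k hk => hα (a + k) (by omega))
      (fun k hk => isUpperParent_one_sub.2 (hβ (b + k) (by omega))) (by omega) (by omega)
      (by rwa [Nat.add_sub_cancel' ha]) ?_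
    simpa [Nat.add_sub_cancel' ha, Nat.add_sub_cancel' hb] using heq
  rcases key with rfl | rfl
  · exact ⟨rfl, (strictAntiOn_den_of_isLowerParent hβ).injOn
      (Set.mem_Iic.2 hl₂) (Set.mem_Iic.2 (hb.trans hl₂)) (heq.symm.trans hdab)⟩
  · exact ⟨(strictAntiOn_den_of_isLowerParent hα).injOn
      (Set.mem_Iic.2 hl₁) (Set.mem_Iic.2 (ha.trans hl₁)) (heq.trans hdab.symm), rfl⟩

end ParentChain

/-- Theorem 6.6 of the paper: comparison of the denominators of the minimal
unimodular chain from `s₁` to `s₂` with those of the chains from `s₁` to `-1`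
and from `1 - s₂` to `-1`. -/
theorem stmt_0
    (s₁ s₂ : ℚ) (hs₂pos : 0 < s₂) (hs : s₂ < s₁) (hs₁lt : s₁ < 1)
    (q : ℕ → ℚ) (n : ℕ) (hq : IsMinimalUnimodChain q n s₁ s₂)
    (q₁ : ℕ → ℚ) (n₁ : ℕ) (hq₁ : IsMinimalUnimodChain q₁ n₁ s₁ (-1))
    (q₂ : ℕ → ℚ) (n₂ : ℕ) (hq₂ : IsMinimalUnimodChain q₂ n₂ (1 - s₂) (-1))
    (l₁ l₂ : ℕ) (hl₁ : l₁ < max 1 (n₁ - 1)) (hl₂ : l₂ < max 1 (n₂ - 1))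
    (heq : (q₁ l₁).den = (q₂ l₂).den)
    (hmax : ∀ l₁' l₂', l₁' < max 1 (n₁ - 1) → l₂' < max 1 (n₂ - 1) →
      (q₁ l₁').den = (q₂ l₂').den → l₁' ≤ l₁ ∧ l₂' ≤ l₂) :
    (∀ i, 1 ≤ i → i ≤ l₁ → (q i).den = (q₁ i).den) ∧
    (∀ i, 1 ≤ i → i ≤ l₂ → (q (n - i)).den = (q₂ i).den) := by
  obtain ⟨h₁end, h₁⟩ := hq₁.of_neg_one (hs₂pos.trans hs) hs₁lt
  obtain ⟨h₂end, h₂⟩ := hq₂.of_neg_one (by linarith) (by linarith)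
  have hden : ∀ i ≤ n, 2 ≤ (q i).den := fun i hi =>
    Rat.two_le_den_of_pos_of_lt_one (hs₂pos.trans_le (hq.1.mem_Icc hi).1)
      ((hq.1.mem_Icc hi).2.trans_lt hs₁lt)
  obtain ⟨c, hcn, hdown, hup⟩ := hq.exists_valley hden
  obtain ⟨hc₁, hhead⟩ := lt_and_eq_of_isLowerParent (hq.1.1.trans hq₁.1.1.symm) hdown
    (fun k hk => (h₁ k hk).2) (fun k hk => hden k (by omega)) h₁end
  -- `x ↦ 1 - x` turns the upper parents along the tail of `q` into lower parents
  obtain ⟨hc₂, htail⟩ := lt_and_eq_of_isLowerParent (α := fun k => 1 - q (n - k)) (a := n - c)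
    (by simp [hq.1.2.1, hq₂.1.1])
    (fun k hk => isLowerParent_one_sub.2 (by
      simpa [show n - (k + 1) + 1 = n - k by omega] using hup (n - (k + 1)) (by omega) (by omega)))
    (fun k hk => (h₂ k hk).2) (fun k hk => by simpa using hden (n - k) (by omega)) h₂end
  have hjunction : q₁ c = 1 - q₂ (n - c) := by
    rw [← hhead c le_rfl, ← htail (n - c) le_rfl, Nat.sub_sub_self hcn, sub_sub_cancel]
  rw [max_eq_right (by omega)] at hl₁ hmax
  rw [max_eq_right (by omega)] at hl₂ hmax
  obtain ⟨hcl₁, hcl₂⟩ := hmax c (n - c) hc₁ hc₂ (by rw [hjunction, Rat.den_one_sub])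
  obtain ⟨rfl, rfl⟩ := eq_of_den_eq_of_isLowerParent (fun k hk => (h₁ k hk).2)
    (fun k hk => (h₂ k hk).2) hjunction hcl₁ hcl₂ hl₁.le hl₂.le (h₁ l₁ hl₁).1 heq
  exact ⟨fun i _ hi => by rw [hhead i hi], fun i _ hi => by rw [← htail i hi, Rat.den_one_sub]⟩
end

section
/- Let s₁ and s₂ be rationals with 0 < s₂ < s₁ < 1, and let δ be the minimal denominator (in lowest terms) of a rational lying in the closed interval [s₂, s₁]. Let d⁽¹⁾₀, …, d⁽¹⁾_{λ₁+1} be the denominators of the terms of the minimal unimodular chain from s₁ to −1, and let d⁽²⁾₀, …, d⁽²⁾_{λ₂+1} be the denominators of the terms of the minimal unimodular chain from 1 − s₂ to −1. Then there exist indices 0 ≤ l₁ < λ₁ + 1 and 0 ≤ l₂ < λ₂ + 1 such that d⁽¹⁾_{l₁} = δ = d⁽²⁾_{l₂}. -/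
theorem Nat.exists_lt_and_not_succ {p : ℕ → Prop} {n : ℕ} (h₀ : p 0) (hn : ¬ p n) :
    ∃ i < n, p i ∧ ¬ p (i + 1) := by
  induction n with
  | zero => exact absurd h₀ hn
  | succ n ih =>
    by_cases hpn : p n
    · exact ⟨n, n.lt_succ_self, hpn, hn⟩
    · obtain ⟨i, hi, hpi⟩ := ih hpn
      exact ⟨i, hi.trans n.lt_succ_self, hpi⟩

theorem Rat.den_add_den_le_of_lt_of_lt {a c r : ℚ}
    (hac : a.num * c.den - c.num * a.den = 1) (hcr : c < r) (hra : r < a) :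
    a.den + c.den ≤ r.den := by
  have hr : 1 ≤ a.num * r.den - r.num * a.den := by linarith [(Rat.lt_iff r a).1 hra]
  have hc : 1 ≤ r.num * c.den - c.num * r.den := by linarith [(Rat.lt_iff c r).1 hcr]
  have hden : (r.den : ℤ) = c.den * (a.num * r.den - r.num * a.den)
      + a.den * (r.num * c.den - c.num * r.den) := by
    linear_combination (-(r.den : ℤ)) * hac
  have : (a.den : ℤ) + c.den ≤ r.den := by
    rw [hden]
    nlinarith [mul_le_mul_of_nonneg_left hr (Int.natCast_nonneg c.den),
      mul_le_mul_of_nonneg_left hc (Int.natCast_nonneg a.den)]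
  exact_mod_cast this

theorem IsUnimodChain.exists_eq_of_den_le {q : ℕ → ℚ} {n : ℕ} {t t' r : ℚ}
    (h : IsUnimodChain q n t t') (ht'r : t' < r) (hrt : r ≤ t)
    (hmin : ∀ x : ℚ, r ≤ x → x ≤ t → r.den ≤ x.den) :
    ∃ l < n, q l = r := by
  obtain ⟨h₀, hn, hdec, huni⟩ := h
  obtain ⟨i, hi, ⟨hrqi, hqit⟩, hnext⟩ :=
    Nat.exists_lt_and_not_succ (p := fun j ↦ r ≤ q j ∧ q j ≤ t)
      ⟨h₀.symm ▸ hrt, h₀.le⟩ fun h ↦ ht'r.not_ge (hn ▸ h.1)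
  have hqr : q (i + 1) < r := by
    by_contra! hle
    exact hnext ⟨hle, ((hdec i hi).trans_le hqit).le⟩
  refine ⟨i, hi, (eq_of_le_of_not_lt hrqi fun hlt ↦ ?_).symm⟩
  have hfarey := Rat.den_add_den_le_of_lt_of_lt (huni i hi) hqr hlt
  have := hmin (q i) hrqi hqit
  linarith [(q (i + 1)).pos]

theorem stmt_1_general
    (s₁ s₂ : ℚ) (hs₂pos : 0 < s₂) (hs₁lt : s₁ < 1)
    (δ : ℕ)
    (hδmem : ∃ r : ℚ, s₂ ≤ r ∧ r ≤ s₁ ∧ r.den = δ)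
    (hδmin : ∀ r : ℚ, s₂ ≤ r → r ≤ s₁ → δ ≤ r.den)
    (q₁ : ℕ → ℚ) (n₁ : ℕ) (hq₁ : IsMinimalUnimodChain q₁ n₁ s₁ (-1))
    (q₂ : ℕ → ℚ) (n₂ : ℕ) (hq₂ : IsMinimalUnimodChain q₂ n₂ (1 - s₂) (-1)) :
    ∃ l₁ l₂, l₁ < n₁ ∧ l₂ < n₂ ∧ (q₁ l₁).den = δ ∧ (q₂ l₂).den = δ := by
  obtain ⟨r, hs₂r, hrs₁, rfl⟩ := hδmem
  obtain ⟨l₁, hl₁, hq₁l₁⟩ := hq₁.1.exists_eq_of_den_le (by linarith) hrs₁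
    fun x hrx hxs₁ ↦ hδmin x (by linarith) hxs₁
  obtain ⟨l₂, hl₂, hq₂l₂⟩ := hq₂.1.exists_eq_of_den_le (r := 1 - r) (by linarith) (by linarith)
    fun x hx hxs₂ ↦ by simpa using hδmin (1 - x) (by linarith) (by linarith)
  exact ⟨l₁, l₂, hl₁, hl₂, by rw [hq₁l₁], by simp [hq₂l₂]⟩

/-- Lemma 6.5 of the paper: the minimal denominator `δ` of a rational in
`[s₂, s₁]` occurs among the denominators of the minimal unimodular chains
from `s₁` to `-1` and from `1 - s₂` to `-1` (excluding the last term). -/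
theorem stmt_1
    (s₁ s₂ : ℚ) (hs₂pos : 0 < s₂) (hs : s₂ < s₁) (hs₁lt : s₁ < 1)
    (δ : ℕ)
    (hδmem : ∃ r : ℚ, s₂ ≤ r ∧ r ≤ s₁ ∧ r.den = δ)
    (hδmin : ∀ r : ℚ, s₂ ≤ r → r ≤ s₁ → δ ≤ r.den)
    (q₁ : ℕ → ℚ) (n₁ : ℕ) (hq₁ : IsMinimalUnimodChain q₁ n₁ s₁ (-1))
    (q₂ : ℕ → ℚ) (n₂ : ℕ) (hq₂ : IsMinimalUnimodChain q₂ n₂ (1 - s₂) (-1)) :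
    ∃ l₁ l₂, l₁ < n₁ ∧ l₂ < n₂ ∧ (q₁ l₁).den = δ ∧ (q₂ l₂).den = δ :=
  stmt_1_general s₁ s₂ hs₂pos hs₁lt δ hδmem hδmin q₁ n₁ hq₁ q₂ n₂ hq₂
end

section
/- Let t > t′ be rationals with [t′, t] ∩ ℤ = ∅, and let m/δ (in lowest terms) be the unique rational of minimal denominator in [t′, t]. Then m/δ occurs as a term of the minimal unimodular chain from t to t′; in particular, δ is the minimum of the denominators d₀, …, d_{λ+1} of the terms of that chain. -/
/-!
Every term of a unimodular chain lies in `[t', t]`, so its denominator is at least that of `r`.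
If `r` were not a term, it would lie strictly between two consecutive terms `a > c`; since
`a` and `c` are Farey neighbours, every rational strictly between them has denominator at least
`den a + den c > den r`, which is absurd.
-/

lemma Rat.add_den_le_den_of_lt_of_lt {a c r : ℚ}
    (h : a.num * (c.den : ℤ) - c.num * (a.den : ℤ) = 1) (hcr : c < r) (hra : r < a) :
    a.den + c.den ≤ r.den := by
  rw [Rat.lt_iff] at hcr hra
  have hra' : 1 ≤ a.num * (r.den : ℤ) - r.num * (a.den : ℤ) := by omega
  have hcr' : 1 ≤ r.num * (c.den : ℤ) - c.num * (r.den : ℤ) := by omega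
  have hr : (r.den : ℤ) = c.den * (a.num * r.den - r.num * a.den)
      + a.den * (r.num * c.den - c.num * r.den) := by
    linear_combination (-(r.den : ℤ)) * h
  have ha : (0 : ℤ) ≤ a.den := by positivity
  have hc : (0 : ℤ) ≤ c.den := by positivity
  zify
  nlinarith

lemma exists_apply_eq_or_mem_Ioo_of_mem_Icc {α : Type*} [LinearOrder α] (f : ℕ → α) {x : α} :
    ∀ {n : ℕ}, x ∈ Set.Icc (f n) (f 0) →
      (∃ i ≤ n, f i = x) ∨ ∃ i < n, x ∈ Set.Ioo (f (i + 1)) (f i)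
  | 0, hx => Or.inl ⟨0, le_rfl, le_antisymm hx.1 hx.2⟩
  | n + 1, hx => by
    rcases le_or_gt (f n) x with hnx | hxn
    · rcases exists_apply_eq_or_mem_Ioo_of_mem_Icc f ⟨hnx, hx.2⟩ with ⟨i, hi, hfi⟩ | ⟨i, hi, hfi⟩
      · exact Or.inl ⟨i, by omega, hfi⟩
      · exact Or.inr ⟨i, by omega, hfi⟩
    · rcases hx.1.eq_or_lt with hfx | hfx
      · exact Or.inl ⟨n + 1, le_rfl, hfx⟩
      · exact Or.inr ⟨n, by omega, hfx, hxn⟩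

namespace IsUnimodChain

variable {q : ℕ → ℚ} {n : ℕ} {t t' : ℚ}

lemma antitoneOn (hq : IsUnimodChain q n t t') : AntitoneOn q (Set.Iic n) :=
  antitoneOn_of_succ_le Set.ordConnected_Iic fun i _ _ hi =>
    (hq.2.2.1 i (Order.succ_le_iff.mp hi)).le

lemma mem_Icc_s2 (hq : IsUnimodChain q n t t') {i : ℕ} (hi : i ≤ n) : q i ∈ Set.Icc t' t := by
  constructor
  · rw [← hq.2.1]; exact hq.antitoneOn hi (Set.mem_Iic.2 le_rfl) hi
  · rw [← hq.1]; exact hq.antitoneOn (Nat.zero_le n) hi (Nat.zero_le i)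

end IsUnimodChain

theorem stmt_2_general
    (t t' : ℚ)
    (r : ℚ) (hr₁ : t' ≤ r) (hr₂ : r ≤ t)
    (hrmin : ∀ r' : ℚ, t' ≤ r' → r' ≤ t → r.den ≤ r'.den)
    (q : ℕ → ℚ) (n : ℕ) (hq : IsMinimalUnimodChain q n t t') :
    (∃ i ≤ n, q i = r) ∧ ∀ i ≤ n, r.den ≤ (q i).den := by
  obtain ⟨hchain, -⟩ := hq
  have hden : ∀ i ≤ n, r.den ≤ (q i).den := fun i hi =>
    hrmin _ (hchain.mem_Icc_s2 hi).1 (hchain.mem_Icc_s2 hi).2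
  refine ⟨?_, hden⟩
  have hr : r ∈ Set.Icc (q n) (q 0) := by rw [hchain.1, hchain.2.1]; exact ⟨hr₁, hr₂⟩
  rcases exists_apply_eq_or_mem_Ioo_of_mem_Icc q hr with hterm | ⟨i, hi, hlt, hgt⟩
  · exact hterm
  · have hsum := Rat.add_den_le_den_of_lt_of_lt (hchain.2.2.2 i hi) hlt hgt
    have hden_i := hden i hi.le
    have hden_pos := (q (i + 1)).pos
    omega

/-- For rationals `t > t'` with `[t', t] ∩ ℤ = ∅`, the unique rational `r` of
minimal denominator in `[t', t]` occurs as a term of the minimal unimodular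
chain from `t` to `t'`; in particular its denominator is the minimum of the
denominators of the chain's terms. -/
theorem stmt_2
    (t t' : ℚ) (htt : t' < t)
    (hint : ∀ z : ℤ, ¬ (t' ≤ (z : ℚ) ∧ (z : ℚ) ≤ t))
    (r : ℚ) (hr₁ : t' ≤ r) (hr₂ : r ≤ t)
    (hrmin : ∀ r' : ℚ, t' ≤ r' → r' ≤ t → r.den ≤ r'.den)
    (q : ℕ → ℚ) (n : ℕ) (hq : IsMinimalUnimodChain q n t t') :
    (∃ i ≤ n, q i = r) ∧ ∀ i ≤ n, r.den ≤ (q i).den :=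
  stmt_2_general t t' r hr₁ hr₂ hrmin q n hq
end

section
/- Let q₁ ≤ q₂ be rationals such that the closed interval [q₁, q₂] contains no integer. Then there exists a unique rational r ∈ [q₁, q₂] of minimal denominator: writing rationals in lowest terms, every rational r′ ∈ [q₁, q₂] has denominator at least that of r, and the only rational in [q₁, q₂] whose denominator equals that of r is r itself. -/
/-!
Take `r` of minimal denominator `d` in the interval; `d ≥ 2` because the interval contains no
integer. If some `r' ≠ r` in the interval also had denominator `d`, say `a / d < r'`, then
`(a + 1) / d` lies in the interval too. Since `a` is a unit mod `d`, there are `p, q` with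
`0 < q < d` and `p d - a q = 1`, and then `a / d < p / q ≤ (a + 1) / d`: a rational in the
interval whose denominator is at most `q < d`, contradicting minimality.
-/

lemma exists_den_lt_mem_Ioc_div (a : ℤ) {d : ℕ} (hd : 2 ≤ d) (had : IsCoprime a d) :
    ∃ t : ℚ, t ∈ Set.Ioc ((a : ℚ) / d) ((a + 1) / d) ∧ t.den < d := by
  obtain ⟨u, v, huv⟩ := had
  obtain ⟨q, hq⟩ : ∃ q, q = -u % d := ⟨_, rfl⟩
  have hqd : q < d := hq ▸ Int.emod_lt_of_pos _ (by omega)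
  obtain ⟨p, hp⟩ : (d : ℤ) ∣ 1 + a * q :=
    ⟨v - a * (-u / d), by rw [hq, Int.emod_def]; linear_combination -huv⟩
  have hq_pos : 0 < q := by
    rcases (hq ▸ Int.emod_nonneg (-u) (by omega : (d : ℤ) ≠ 0)).lt_or_eq with h | rfl
    · exact h
    · have := Int.eq_one_of_mul_eq_one_right (by omega) (by linarith : (d : ℤ) * p = 1)
      omega
  have hd_pos : (0 : ℚ) < d := by positivity
  have hq_pos' : (0 : ℚ) < q := by exact_mod_cast hq_pos
  refine ⟨(p : ℚ) / q, ⟨?_, ?_⟩, ?_⟩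
  · rw [div_lt_div_iff₀ hd_pos hq_pos']
    exact_mod_cast (by linarith : a * q < p * d)
  · rw [div_le_div_iff₀ hq_pos' hd_pos]
    exact_mod_cast (by linarith : p * d ≤ (a + 1) * q)
  · have := Int.le_of_dvd hq_pos (Rat.den_dvd p q)
    rw [Rat.divInt_eq_div] at this
    omega

lemma exists_den_lt_mem_Ioc {r s : ℚ} (hrs : r < s) (hden : r.den = s.den) (hr : r.den ≠ 1) :
    ∃ t ∈ Set.Ioc r s, t.den < r.den := by
  obtain ⟨t, ⟨hrt, hts⟩, htd⟩ :=
    exists_den_lt_mem_Ioc_div r.num (by have := r.pos; omega) (Rat.isCoprime_num_den r)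
  have hd_pos : (0 : ℚ) < r.den := by exact_mod_cast r.pos
  rw [← Rat.num_div_den r, ← Rat.num_div_den s, ← hden, div_lt_div_iff_of_pos_right hd_pos]
    at hrs
  rw [Rat.num_div_den] at hrt
  refine ⟨t, ⟨hrt, hts.trans ?_⟩, htd⟩
  rw [← Rat.num_div_den s, ← hden, div_le_div_iff_of_pos_right hd_pos]
  exact_mod_cast Int.add_one_le_of_lt (by exact_mod_cast hrs)

/-- Lemma 6.4 of the paper: a closed interval of rationals containing no
integer contains a unique rational of minimal denominator (denominators
taken in lowest terms). -/
theorem stmt_3 (q₁ q₂ : ℚ) (h : q₁ ≤ q₂)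
    (hint : ∀ z : ℤ, ¬ (q₁ ≤ (z : ℚ) ∧ (z : ℚ) ≤ q₂)) :
    ∃ r : ℚ, q₁ ≤ r ∧ r ≤ q₂ ∧
      (∀ r' : ℚ, q₁ ≤ r' → r' ≤ q₂ → r.den ≤ r'.den) ∧
      (∀ r' : ℚ, q₁ ≤ r' → r' ≤ q₂ → r'.den = r.den → r' = r) := by
  classical
  have hne : ∃ n, ∃ r : ℚ, q₁ ≤ r ∧ r ≤ q₂ ∧ r.den = n := ⟨_, q₁, le_rfl, h, rfl⟩
  obtain ⟨r, hr₁, hr₂, hrd⟩ := Nat.find_spec hne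
  have hmin : ∀ r' : ℚ, q₁ ≤ r' → r' ≤ q₂ → r.den ≤ r'.den := fun r' h₁ h₂ =>
    hrd ▸ Nat.find_min' hne ⟨r', h₁, h₂, rfl⟩
  have hr_den : r.den ≠ 1 := fun h₁ =>
    hint r.num (by rw [Rat.coe_int_num_of_den_eq_one h₁]; exact ⟨hr₁, hr₂⟩)
  refine ⟨r, hr₁, hr₂, hmin, fun r' h₁ h₂ hden => ?_⟩
  by_contra hne'
  rcases lt_or_gt_of_ne hne' with hlt | hlt
  · obtain ⟨t, ⟨ht₁, ht₂⟩, htd⟩ := exists_den_lt_mem_Ioc hlt hden (hden ▸ hr_den)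
    exact (hmin t (by linarith) (by linarith)).not_gt (hden ▸ htd)
  · obtain ⟨t, ⟨ht₁, ht₂⟩, htd⟩ := exists_den_lt_mem_Ioc hlt hden.symm hr_den
    exact (hmin t (by linarith) (by linarith)).not_gt htd
end

section
/- Let n ≥ 1 be an integer, let d be a rational number whose denominator in lowest terms is b ≥ 1, and let λ be a rational with 2λ ∈ ℤ. Then the number of integers x with 1 ≤ x ≤ n and λ − x·d ∈ ℤ equals: ⌊n/b⌋ if λ ∈ ℤ; ⌊n/b + 1/2⌋ if λ ∉ ℤ and b is even; and 0 if λ ∉ ℤ and b is odd. -/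
/-!
Write `d = c / b` with `c` and `b` coprime. If `λ ∈ ℤ`, then `λ - x d ∈ ℤ` iff `b ∣ x`. Otherwise
`λ ∈ 1/2 + ℤ`, so `λ - x d ∈ ℤ` iff `x d ∈ 1/2 + ℤ`, i.e. iff `b ∣ 2x` but `b ∤ x`. For odd `b`
this never happens; for `b = 2m` it says that `x` is an odd multiple of `m`, and there are
`⌊n/m⌋ - ⌊n/2m⌋ = ⌊(n + m)/2m⌋` of those in `[1, n]`.
-/

namespace Rat

theorem den_intCast_mul_eq_one_iff (x : ℤ) (q : ℚ) : ((x : ℚ) * q).den = 1 ↔ (q.den : ℤ) ∣ x := by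
  have hcop : IsCoprime (q.den : ℤ) q.num := by
    rw [Int.isCoprime_iff_gcd_eq_one, Int.gcd_comm]
    exact q.reduced
  conv_lhs => rw [← q.num_div_den, ← mul_div_assoc, ← Int.cast_mul]
  rw [← Int.cast_natCast, den_div_intCast_eq_one_iff _ _ (by exact_mod_cast q.den_ne_zero)]
  exact ⟨hcop.dvd_of_dvd_mul_right, fun h => h.mul_right _⟩

theorem den_natCast_mul_eq_one_iff (x : ℕ) (q : ℚ) : ((x : ℚ) * q).den = 1 ↔ q.den ∣ x := by
  simpa [Int.natCast_dvd_natCast] using den_intCast_mul_eq_one_iff x q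

theorem den_sub_eq_of_den_eq_one {p : ℚ} (hp : p.den = 1) (q : ℚ) : (p - q).den = q.den := by
  rw [← (den_eq_one_iff p).mp hp, intCast_sub_den]

theorem den_sub_half_eq_one_iff (q : ℚ) : (q - 1 / 2).den = 1 ↔ (2 * q).den = 1 ∧ q.den ≠ 1 := by
  constructor
  · intro h
    refine ⟨?_, fun hq => ?_⟩
    · rw [show 2 * q = ((2 * (q - 1 / 2).num + 1 : ℤ) : ℚ) by
        push_cast [(den_eq_one_iff _).mp h]; ring]
      exact den_intCast _
    · rw [den_sub_eq_of_den_eq_one hq] at h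
      norm_num at h
  · rintro ⟨h2, hq⟩
    replace h2 := (den_eq_one_iff _).mp h2
    obtain ⟨k, hk | hk⟩ := Int.even_or_odd' (2 * q).num
    · refine absurd ?_ hq
      rw [show q = (k : ℚ) by push_cast [hk] at h2; linarith]
      exact den_intCast k
    · rw [show q - 1 / 2 = (k : ℚ) by push_cast [hk] at h2; linarith]
      exact den_intCast k

theorem den_sub_natCast_mul_eq_one_iff {p : ℚ} (hp2 : (2 * p).den = 1) (hp : p.den ≠ 1)
    (x : ℕ) (q : ℚ) : (p - x * q).den = 1 ↔ q.den ∣ 2 * x ∧ ¬ q.den ∣ x := by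
  have hhalf := (den_sub_half_eq_one_iff p).mpr ⟨hp2, hp⟩
  rw [show p - x * q = (p - 1 / 2) - (x * q - 1 / 2) by ring, den_sub_eq_of_den_eq_one hhalf,
    den_sub_half_eq_one_iff, ← mul_assoc, ← den_natCast_mul_eq_one_iff,
    ← den_natCast_mul_eq_one_iff, Nat.cast_mul, Nat.cast_ofNat]

end Rat

theorem Nat.Ioc_filter_dvd_and_not_two_mul_dvd_card_eq_div (n m : ℕ) :
    ((Finset.Ioc 0 n).filter (fun x => m ∣ x ∧ ¬ 2 * m ∣ x)).card = (n + m) / (2 * m) := by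
  rw [Finset.filter_and_not, Finset.card_sdiff_of_subset
      (Finset.monotone_filter_right _ fun _ _ h => (dvd_mul_left m 2).trans h),
    Nat.Ioc_filter_dvd_card_eq_div, Nat.Ioc_filter_dvd_card_eq_div]
  rcases m.eq_zero_or_pos with rfl | hm
  · simp
  rw [mul_comm, ← Nat.div_div_eq_div_mul, ← Nat.div_div_eq_div_mul, Nat.add_div_right _ hm]
  generalize n / m = q
  omega

theorem stmt_6_general (n : ℕ) (d lam : ℚ) (b : ℕ) (hb : d.den = b)
    (hlam : (2 * lam).den = 1) :
    ((Finset.Icc 1 n).filter (fun x : ℕ => (lam - (x : ℚ) * d).den = 1)).card =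
      if lam.den = 1 then n / b
      else if Even b then (2 * n + b) / (2 * b)
      else 0 := by
  subst hb
  rw [show Finset.Icc 1 n = Finset.Ioc 0 n from Finset.Icc_add_one_left_eq_Ioc 0 n]
  split_ifs with hint heven
  · simp only [Rat.den_sub_eq_of_den_eq_one hint, Rat.den_natCast_mul_eq_one_iff]
    exact Nat.Ioc_filter_dvd_card_eq_div n d.den
  · obtain ⟨m, hm⟩ := even_iff_two_dvd.mp heven
    simp only [Rat.den_sub_natCast_mul_eq_one_iff hlam hint, hm, Nat.mul_dvd_mul_iff_left two_pos]
    rw [Nat.Ioc_filter_dvd_and_not_two_mul_dvd_card_eq_div, ← mul_add,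
      Nat.mul_div_mul_left _ _ two_pos]
  · have hcop := (Nat.not_even_iff_odd.mp heven).coprime_two_right
    simp only [Rat.den_sub_natCast_mul_eq_one_iff hlam hint]
    exact Finset.card_eq_zero.mpr <| Finset.filter_eq_empty_iff.mpr
      fun _ _ ⟨h2x, hx⟩ => hx (hcop.dvd_of_dvd_mul_left h2x)

/-- The counting step in Proposition 5.23 of the paper: for `d` a rational
of denominator `b` (in lowest terms) and `λ` a half-integer, the number of
integers `1 ≤ x ≤ n` with `λ − x·d ∈ ℤ` is `⌊n/b⌋` if `λ ∈ ℤ`;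
`⌊n/b + 1/2⌋` if `λ ∉ ℤ` and `b` is even; and `0` if `λ ∉ ℤ` and `b` is
odd.  (A rational is an integer iff its denominator in lowest terms is 1.) -/
theorem stmt_6 (n : ℕ) (hn : 1 ≤ n) (d lam : ℚ) (b : ℕ) (hb : d.den = b)
    (hlam : (2 * lam).den = 1) :
    ((Finset.Icc 1 n).filter (fun x : ℕ => (lam - (x : ℚ) * d).den = 1)).card =
      if lam.den = 1 then n / b
      else if Even b then (2 * n + b) / (2 * b)
      else 0 :=
  stmt_6_general n d lam b hb hlam
end

section
/- For any rationals t > t′, there is exactly one minimal unimodular chain from t to t′. -/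
/-!
Write `x.cross y = m d' - m' d` for `x = m/d`, `y = m'/d'`, and `eᵢ = (q i).cross t'`. Along a
unimodular chain the Plücker relation gives `e_{i-1} + e_{i+1} = cᵢ eᵢ` with
`cᵢ = (q (i-1)).cross (q (i+1)) ≥ 1`, and `cᵢ = 1` exactly when `q i` is the mediant of its
neighbours. So along a minimal chain `e` is convex, and as `e_{n-1} = 1` and `e_n = 0` it strictly
decreases: every step `x → y` has `x.cross y = 1` and `0 ≤ y.cross t' < x.cross t'`.

The `y` with `x.cross y = 1` form a coset `y₀ + ℤ x`, on which `y.cross t'` runs through one residue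
class modulo `x.cross t' > 0`, so exactly one of them satisfies these inequalities. Hence every step
of a minimal chain is forced, which gives uniqueness; and taking the forced step repeatedly gives a
chain, which reaches `t'` because `e` decreases, and which is minimal because a mediant
`q i = q (i-1) + q (i+1)` would make `(q (i+1)).cross t' < 0`.
-/

namespace Rat

def cross (x y : ℚ) : ℤ := x.num * y.den - y.num * x.den

theorem cross_self (x : ℚ) : x.cross x = 0 := by
  rw [cross, mul_comm, sub_self]

theorem cross_pos_iff {x y : ℚ} : 0 < x.cross y ↔ y < x := by
  rw [cross, sub_pos, Rat.lt_iff]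

theorem cross_nonneg_iff {x y : ℚ} : 0 ≤ x.cross y ↔ y ≤ x := by
  rw [cross, sub_nonneg, Rat.le_iff]

theorem cross_mul_cross (a b c z : ℚ) :
    a.cross c * b.cross z = a.cross b * c.cross z + b.cross c * a.cross z := by
  simp only [cross]; ring

theorem cross_mul_num (a b c : ℚ) : a.cross c * b.num = b.cross c * a.num + a.cross b * c.num := by
  simp only [cross]; ring

theorem cross_mul_den (a b c : ℚ) :
    a.cross c * b.den = b.cross c * a.den + a.cross b * c.den := by
  simp only [cross]; ring

theorem exists_num_den {N D : ℤ} (hD : 0 < D) (h : IsCoprime N D) :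
    ∃ y : ℚ, y.num = N ∧ (y.den : ℤ) = D := by
  have hcop : N.natAbs.Coprime D.natAbs := Int.isCoprime_iff_gcd_eq_one.mp h
  exact ⟨N / D, num_div_eq_of_coprime hD hcop, den_div_eq_of_coprime hD hcop⟩

end Rat

def IsMediant (a b c : ℚ) : Prop :=
  b.num = a.num + c.num ∧ b.den = a.den + c.den

theorem IsMediant.cross_eq {a b c : ℚ} (h : IsMediant a b c) (z : ℚ) :
    b.cross z = a.cross z + c.cross z := by
  have hden : (b.den : ℤ) = a.den + c.den := by exact_mod_cast h.2
  simp only [Rat.cross, h.1, hden]; ring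

theorem isMediant_of_cross_eq_one {a b c : ℚ} (hab : a.cross b = 1) (hbc : b.cross c = 1)
    (hac : a.cross c = 1) : IsMediant a b c := by
  have hnum := Rat.cross_mul_num a b c
  have hden := Rat.cross_mul_den a b c
  rw [hab, hbc, hac, one_mul, one_mul, one_mul] at hnum hden
  exact ⟨hnum, by exact_mod_cast hden⟩

theorem sub_succ_le_sub_succ_of_convex {e : ℕ → ℤ} {n : ℕ}
    (hconv : ∀ i, i + 1 ≤ n → 2 * e (i + 1) ≤ e i + e (i + 2)) {i : ℕ} (hi : i ≤ n) :
    e n - e (n + 1) ≤ e i - e (i + 1) := by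
  refine Nat.decreasingInduction (motive := fun i _ => e n - e (n + 1) ≤ e i - e (i + 1))
    (fun k hk ih => ?_) le_rfl hi
  linarith [hconv k hk]

theorem IsUnimodChain.cross_eq_one {q : ℕ → ℚ} {n : ℕ} {t t' : ℚ} (h : IsUnimodChain q n t t')
    {i : ℕ} (hi : i < n) : (q i).cross (q (i + 1)) = 1 :=
  h.2.2.2 i hi

theorem IsUnimodChain.lt_of_lt {q : ℕ → ℚ} {n : ℕ} {t t' : ℚ} (h : IsUnimodChain q n t t')
    {i j : ℕ} (hij : i < j) (hj : j ≤ n) : q j < q i := by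
  induction j, hij using Nat.le_induction with
  | base => exact h.2.2.1 i (by omega)
  | succ j hij ih => exact (h.2.2.1 j (by omega)).trans (ih (by omega))

theorem IsUnimodChain.last_lt {q : ℕ → ℚ} {n : ℕ} {t t' : ℚ} (h : IsUnimodChain q n t t')
    {i : ℕ} (hi : i < n) : t' < q i :=
  h.2.1 ▸ h.lt_of_lt hi le_rfl

theorem IsUnimodChain.last_le {q : ℕ → ℚ} {n : ℕ} {t t' : ℚ} (h : IsUnimodChain q n t t')
    {i : ℕ} (hi : i ≤ n) : t' ≤ q i := by
  rcases hi.lt_or_eq with hi | rfl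
  exacts [(h.last_lt hi).le, h.2.1.ge]

def IsGreedyStep (t' x y : ℚ) : Prop :=
  x.cross y = 1 ∧ 0 ≤ y.cross t' ∧ y.cross t' < x.cross t'

theorem IsGreedyStep.unique {t' x y y' : ℚ} (h : IsGreedyStep t' x y) (h' : IsGreedyStep t' x y') :
    y = y' := by
  have hplucker := Rat.cross_mul_cross x y' y t'
  rw [h.1, h'.1, one_mul, one_mul] at hplucker
  have hjc : y'.cross y * x.cross t' = 0 :=
    Int.eq_zero_of_abs_lt_dvd (dvd_mul_left _ _)
      (abs_lt.mpr ⟨by linarith [h.2.2, h'.2.1], by linarith [h.2.1, h'.2.2]⟩)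
  have hj : y'.cross y = 0 := (mul_eq_zero.mp hjc).resolve_right (by linarith [h.2.1, h.2.2])
  have hnum := Rat.cross_mul_num x y' y
  have hden := Rat.cross_mul_den x y' y
  rw [h.1, h'.1, hj, one_mul, one_mul, zero_mul, zero_add] at hnum hden
  exact Rat.ext hnum.symm (by exact_mod_cast hden.symm)

theorem exists_isGreedyStep {t' x : ℚ} (hx : t' < x) : ∃ y, IsGreedyStep t' x y := by
  obtain ⟨u, v, huv⟩ : IsCoprime x.num x.den := Int.isCoprime_iff_gcd_eq_one.mpr x.reduced
  have hc : 0 < x.cross t' := Rat.cross_pos_iff.mpr hx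
  -- The numerator/denominator pairs `(-v, u) - k • (x.num, x.den)` are the neighbours of `x`;
  -- their cross products with `t'` are `e - k * x.cross t'`.
  set e := -v * t'.den - t'.num * u
  obtain ⟨k, r, hr_nonneg, hr_lt, hekr⟩ : ∃ k r, 0 ≤ r ∧ r < x.cross t' ∧ e = k * x.cross t' + r :=
    ⟨e / x.cross t', e % x.cross t', Int.emod_nonneg e hc.ne', Int.emod_lt_of_pos e hc,
      (Int.ediv_mul_add_emod e _).symm⟩
  simp only [Rat.cross] at hekr hc hr_lt
  have hdet : x.num * (u - k * x.den) - (-v - k * x.num) * x.den = 1 := by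
    linear_combination huv
  have hrem : (-v - k * x.num) * t'.den - t'.num * (u - k * x.den) = r := by
    linear_combination hekr
  have hD : 0 < u - k * x.den := by
    have hden : (x.num * t'.den - t'.num * x.den) * (u - k * x.den) = t'.den + r * x.den := by
      linear_combination (t'.den : ℤ) * hdet + (x.den : ℤ) * hrem
    have : (0 : ℤ) < t'.den := by exact_mod_cast t'.pos
    exact pos_of_mul_pos_right (hden ▸ by positivity) hc.le
  obtain ⟨y, hyN, hyD⟩ :=
    Rat.exists_num_den (N := -v - k * x.num) hD ⟨-x.den, x.num, by linear_combination hdet⟩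
  refine ⟨y, ?_, ?_, ?_⟩ <;> simp only [Rat.cross, hyN, hyD]
  · exact hdet
  · exact hrem ▸ hr_nonneg
  · exact hrem ▸ hr_lt

namespace IsMinimalUnimodChain

variable {q : ℕ → ℚ} {n : ℕ} {t t' : ℚ}

theorem two_le_cross (h : IsMinimalUnimodChain q n t t') {i : ℕ} (hi : i + 2 ≤ n) :
    2 ≤ (q i).cross (q (i + 2)) := by
  have hpos : 0 < (q i).cross (q (i + 2)) := Rat.cross_pos_iff.mpr (h.1.lt_of_lt (by omega) hi)
  have hne : (q i).cross (q (i + 2)) ≠ 1 := fun h1 =>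
    h.2 (i + 1) (by omega) (by omega)
      (isMediant_of_cross_eq_one (h.1.cross_eq_one (i := i) (by omega))
        (h.1.cross_eq_one (i := i + 1) (by omega)) h1)
  omega

theorem cross_last_lt (h : IsMinimalUnimodChain q n t t') {i : ℕ} (hi : i < n) :
    (q (i + 1)).cross t' < (q i).cross t' := by
  obtain ⟨m, rfl⟩ : ∃ m, n = m + 1 := ⟨n - 1, by omega⟩
  have hconv : ∀ k, k + 1 ≤ m →
      2 * (q (k + 1)).cross t' ≤ (q k).cross t' + (q (k + 2)).cross t' := by
    intro k hk
    have hplucker := Rat.cross_mul_cross (q k) (q (k + 1)) (q (k + 2)) t'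
    rw [h.1.cross_eq_one (i := k) (by omega), h.1.cross_eq_one (i := k + 1) (by omega)] at hplucker
    have hnonneg : 0 ≤ (q (k + 1)).cross t' := Rat.cross_nonneg_iff.mpr (h.1.last_le (by omega))
    nlinarith [h.two_le_cross (i := k) (by omega)]
  have hgap := sub_succ_le_sub_succ_of_convex hconv (i := i) (by omega)
  have hlast : (q (m + 1)).cross t' = 0 := by rw [h.1.2.1, Rat.cross_self]
  have hpenult : (q m).cross t' = 1 := h.1.2.1 ▸ h.1.cross_eq_one (i := m) (by omega)
  omega

theorem isGreedyStep (h : IsMinimalUnimodChain q n t t') {i : ℕ} (hi : i < n) :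
    IsGreedyStep t' (q i) (q (i + 1)) :=
  ⟨h.1.cross_eq_one hi, Rat.cross_nonneg_iff.mpr (h.1.last_le hi), h.cross_last_lt hi⟩

theorem unique {q' : ℕ → ℚ} {n' : ℕ} (h : IsMinimalUnimodChain q n t t')
    (h' : IsMinimalUnimodChain q' n' t t') : n = n' ∧ ∀ i ≤ n, q i = q' i := by
  have hagree : ∀ i, i ≤ n → i ≤ n' → q i = q' i := by
    intro i
    induction i with
    | zero => exact fun _ _ => h.1.1.trans h'.1.1.symm
    | succ i ih =>
      intro hi hi'
      have hprev := ih (by omega) (by omega)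
      exact (h.isGreedyStep hi).unique (hprev ▸ h'.isGreedyStep hi')
  have hlen : n = n' := by
    rcases lt_trichotomy n n' with hlt | heq | hgt
    · have hend := h'.1.last_lt hlt
      rw [← hagree n le_rfl hlt.le, h.1.2.1] at hend
      exact absurd hend (lt_irrefl t')
    · exact heq
    · have hend := h.1.last_lt hgt
      rw [hagree n' hgt.le le_rfl, h'.1.2.1] at hend
      exact absurd hend (lt_irrefl t')
  exact ⟨hlen, fun i hi => hagree i hi (hlen ▸ hi)⟩

end IsMinimalUnimodChain

def consSeq {α : Type*} (a : α) (f : ℕ → α) : ℕ → α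
  | 0 => a
  | i + 1 => f i

theorem IsMinimalUnimodChain.cons {q : ℕ → ℚ} {n : ℕ} {x y t' : ℚ}
    (h : IsMinimalUnimodChain q n y t') (hxy : IsGreedyStep t' x y) :
    IsMinimalUnimodChain (consSeq x q) (n + 1) x t' := by
  refine ⟨⟨rfl, h.1.2.1, fun i hi => ?_, fun i hi => ?_⟩, fun i hi₁ hi => ?_⟩
  · rcases i with _ | i
    · show q 0 < x
      exact h.1.1 ▸ Rat.cross_pos_iff.mp (hxy.1 ▸ one_pos)
    · exact h.1.2.2.1 i (by omega)
  · rcases i with _ | i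
    · show x.cross (q 0) = 1
      exact h.1.1 ▸ hxy.1
    · exact h.1.cross_eq_one (i := i) (by omega)
  · rcases i with _ | _ | i
    · omega
    · intro hmed
      have hsum := IsMediant.cross_eq (a := x) hmed t'
      have hnonneg := Rat.cross_nonneg_iff.mpr (h.1.last_le (i := 1) (by omega))
      simp only [consSeq, h.1.1] at hsum hnonneg
      linarith [hxy.2.2]
    · exact h.2 (i + 1) (by omega) (by omega)

theorem exists_isMinimalUnimodChain {t t' : ℚ} (h : t' ≤ t) :
    ∃ q n, IsMinimalUnimodChain q n t t' := by
  induction hN : (t.cross t').toNat using Nat.strong_induction_on generalizing t with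
  | _ N ih =>
  rcases h.eq_or_lt with rfl | hlt
  · exact ⟨fun _ => t', 0, ⟨rfl, rfl, by simp, by simp⟩, by simp⟩
  · obtain ⟨y, hy⟩ := exists_isGreedyStep hlt
    obtain ⟨q, n, hq⟩ := ih _ (by have := hy.2.1; have := hy.2.2; omega)
      (Rat.cross_nonneg_iff.mp hy.2.1) rfl
    exact ⟨consSeq t q, n + 1, hq.cons hy⟩

/-- Remark 4.7 of the paper: for any rationals `t > t'` there is exactly one
minimal unimodular chain from `t` to `t'` (uniqueness meaning any two such
chains have the same length and the same terms). -/
theorem stmt_10 (t t' : ℚ) (htt : t' < t) :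
    (∃ (q : ℕ → ℚ) (n : ℕ), IsMinimalUnimodChain q n t t') ∧
    (∀ (q q' : ℕ → ℚ) (n n' : ℕ),
      IsMinimalUnimodChain q n t t' → IsMinimalUnimodChain q' n' t t' →
      n = n' ∧ ∀ i ≤ n, q i = q' i) :=
  ⟨exists_isMinimalUnimodChain htt.le, fun _ _ _ _ h h' => h.unique h'⟩
end

section
/- Let t > t′ be rationals such that (t′, t) ∩ ℤ = {N, N+1, …, N+a} is nonempty (a ≥ 0), and let t = q₀ > q₁ > ⋯ > q_{λ+1} = t′ be the minimal unimodular chain from t to t′, with denominators d₀, …, d_{λ+1} in lowest terms. Then each of the integers N, N+1, …, N+a occurs as a term of the chain; moreover, if q_{h} is the last term before the term equal to N+a and q_{l} is the first term after the term equal to N, then d₀ > d₁ > ⋯ > d_h is strictly decreasing and d_l < d_{l+1} < ⋯ < d_{λ+1} is strictly increasing. -/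
namespace Rat

lemma intCast_notMem_Ioo_of_num_mul_den_sub_eq_one {p r : ℚ}
    (h : p.num * r.den - r.num * p.den = 1) (z : ℤ) : (z : ℚ) ∉ Set.Ioo r p := by
  rintro ⟨hrz, hzp⟩
  rw [Rat.lt_iff] at hrz hzp
  simp only [Rat.num_intCast, Rat.den_intCast, Nat.cast_one, mul_one] at hrz hzp
  have hr : (0 : ℤ) < r.den := mod_cast r.pos
  have hp : (0 : ℤ) < p.den := mod_cast p.pos
  nlinarith [mul_le_mul_of_nonneg_right (show z * p.den + 1 ≤ p.num by omega) hr.le,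
    mul_le_mul_of_nonneg_right (show r.num + 1 ≤ z * r.den by omega) hp.le]

lemma exists_num_add_num_eq_mul_of_num_mul_den_sub_eq_one {p r s : ℚ}
    (hpr : p.num * r.den - r.num * p.den = 1) (hrs : r.num * s.den - s.num * r.den = 1) :
    ∃ c : ℤ, p.num + s.num = c * r.num ∧ (p.den + s.den : ℤ) = c * r.den := by
  have key : (p.num + s.num) * r.den = r.num * (p.den + s.den) := by
    linear_combination hpr - hrs
  have hcop : IsCoprime (r.den : ℤ) r.num := Int.isCoprime_iff_gcd_eq_one.mpr (by
    rw [Int.gcd_comm]; exact r.reduced)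
  obtain ⟨c, hc⟩ := hcop.dvd_of_dvd_mul_left ⟨p.num + s.num, by rw [← key, mul_comm]⟩
  refine ⟨c, mul_right_cancel₀ (by positivity : (r.den : ℤ) ≠ 0) ?_, by rw [hc, mul_comm]⟩
  rw [key, hc]
  ring

end Rat

section ConvexSequence

variable {G : Type*} [AddCommGroup G] [LinearOrder G] [IsOrderedAddMonoid G]
  {f : ℕ → G} {n : ℕ}

lemma monotoneOn_Icc_of_monotoneOn_sub {i : ℕ}
    (hf : MonotoneOn (fun j ↦ f (j + 1) - f j) (Set.Iio n)) (hi : f i ≤ f (i + 1)) :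
    MonotoneOn f (Set.Icc i n) := by
  refine monotoneOn_of_le_succ Set.ordConnected_Icc fun j _ hj hj' ↦ ?_
  simp only [Order.succ_eq_add_one, Set.mem_Icc] at hj hj' ⊢
  have := hf (show i < n by omega) (show j < n by omega) hj.1
  exact sub_nonneg.mp ((sub_nonneg.mpr hi).trans this)

lemma antitoneOn_Iic_of_monotoneOn_sub {i : ℕ}
    (hf : MonotoneOn (fun j ↦ f (j + 1) - f j) (Set.Iio n)) (hin : i < n)
    (hi : f (i + 1) ≤ f i) : AntitoneOn f (Set.Iic (i + 1)) := by
  refine antitoneOn_of_succ_le Set.ordConnected_Iic fun j _ _ hj ↦ ?_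
  simp only [Order.succ_eq_add_one, Set.mem_Iic] at hj ⊢
  have := hf (show j < n by omega) hin (show j ≤ i by omega)
  exact sub_nonpos.mp (this.trans (sub_nonpos.mpr hi))

end ConvexSequence

section UnimodChain

variable {q : ℕ → ℚ} {n : ℕ} {t t' : ℚ}

namespace IsUnimodChain

lemma strictAntiOn_s12 (h : IsUnimodChain q n t t') : StrictAntiOn q (Set.Iic n) :=
  strictAntiOn_Iic_of_succ_lt fun m hm ↦ by simpa using h.2.2.1 m hm

lemma mem_Ioo (h : IsUnimodChain q n t t') {i : ℕ} (hi₀ : 0 < i) (hin : i < n) :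
    q i ∈ Set.Ioo t' t := by
  constructor
  · rw [← h.2.1]
    exact h.strictAntiOn_s12 (Set.mem_Iic.2 hin.le) (Set.mem_Iic.2 le_rfl) hin
  · rw [← h.1]
    exact h.strictAntiOn_s12 (Set.mem_Iic.2 (Nat.zero_le n)) (Set.mem_Iic.2 hin.le) hi₀

lemma exists_eq_intCast (h : IsUnimodChain q n t t') {z : ℤ} (hz : (z : ℚ) ∈ Set.Ioo t' t) :
    ∃ i ≤ n, q i = z := by
  classical
  have hex : ∃ i, q i ≤ z := ⟨n, h.2.1 ▸ hz.1.le⟩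
  set i := Nat.find hex
  have hin : i ≤ n := Nat.find_min' hex (h.2.1 ▸ hz.1.le)
  have hi₀ : i ≠ 0 := by rw [Ne, Nat.find_eq_zero, h.1]; exact hz.2.not_ge
  refine ⟨i, hin, (Nat.find_spec hex).eq_of_not_lt fun hlt ↦ ?_⟩
  have hprev : (z : ℚ) < q (i - 1) := not_le.mp (Nat.find_min hex (by omega))
  have hstep := h.2.2.2 (i - 1) (by omega)
  rw [Nat.sub_add_cancel (Nat.pos_of_ne_zero hi₀)] at hstep
  exact Rat.intCast_notMem_Ioo_of_num_mul_den_sub_eq_one hstep z ⟨hlt, hprev⟩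

lemma exists_eq_intCast_of_den_le_one (h : IsUnimodChain q n t t') {j : ℕ} (hj₀ : 0 < j)
    (hjn : j < n) (hden : (q j).den ≤ 1) :
    ∃ z : ℤ, q j = z ∧ (z : ℚ) ∈ Set.Ioo t' t := by
  have hz : ((q j).num : ℚ) = q j := (Rat.den_eq_one_iff _).mp (by have := (q j).pos; omega)
  exact ⟨(q j).num, hz.symm, hz ▸ h.mem_Ioo hj₀ hjn⟩

end IsUnimodChain

lemma IsMinimalUnimodChain.monotoneOn_den_sub (h : IsMinimalUnimodChain q n t t') :
    MonotoneOn (fun i ↦ ((q (i + 1)).den : ℤ) - (q i).den) (Set.Iio n) := by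
  refine monotoneOn_of_le_succ Set.ordConnected_Iio fun i _ _ hi ↦ ?_
  simp only [Order.succ_eq_add_one, Set.mem_Iio] at hi ⊢
  obtain ⟨c, hnum, hden⟩ := Rat.exists_num_add_num_eq_mul_of_num_mul_den_sub_eq_one
    (h.1.2.2.2 i (by omega)) (h.1.2.2.2 (i + 1) hi)
  have hc₁ : c ≠ 1 := by
    rintro rfl
    refine h.2 (i + 1) (by omega) hi ⟨?_, ?_⟩
    · simpa using hnum.symm
    · simp only [one_mul, add_tsub_cancel_right] at hden ⊢
      exact_mod_cast hden.symm
  have hd₀ : (0 : ℤ) < (q i).den := mod_cast (q i).pos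
  have hd₁ : (0 : ℤ) < (q (i + 1)).den := mod_cast (q (i + 1)).pos
  have hd₂ : (0 : ℤ) < (q (i + 1 + 1)).den := mod_cast (q (i + 1 + 1)).pos
  have hc₀ : 0 < c := pos_of_mul_pos_left (hden ▸ add_pos hd₀ hd₂) hd₁.le
  nlinarith [show 2 ≤ c by omega]

end UnimodChain

theorem stmt_12_general (t t' : ℚ)
    (N : ℤ) (a : ℕ)
    (hint : ∀ z : ℤ, (t' < (z : ℚ) ∧ (z : ℚ) < t) ↔ (N ≤ z ∧ z ≤ N + a))
    (q : ℕ → ℚ) (n : ℕ) (hq : IsMinimalUnimodChain q n t t') :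
    (∀ j : ℤ, N ≤ j → j ≤ N + a → ∃ i ≤ n, q i = (j : ℚ)) ∧
    (∀ ia i0, ia ≤ n → i0 ≤ n →
      q ia = ((N + (a : ℤ) : ℤ) : ℚ) → q i0 = ((N : ℤ) : ℚ) →
      (∀ i, i + 1 < ia → (q (i + 1)).den < (q i).den) ∧
      (∀ i, i0 < i → i < n → (q i).den < (q (i + 1)).den)) := by
  have hchain := hq.1
  have hconvex := hq.monotoneOn_den_sub
  refine ⟨fun j hj₁ hj₂ ↦ hchain.exists_eq_intCast ((hint j).mpr ⟨hj₁, hj₂⟩), ?_⟩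
  intro ia i0 hia hi0 hqa hq0
  constructor
  · intro i hi
    by_contra! hle
    have hrise := monotoneOn_Icc_of_monotoneOn_sub (f := fun j ↦ ((q j).den : ℤ)) hconvex
      (mod_cast hle) ⟨by omega, by omega⟩ ⟨by omega, hia⟩ (by omega : i + 1 ≤ ia)
    obtain ⟨z, hz, hzI⟩ :=
      hchain.exists_eq_intCast_of_den_le_one (j := i + 1) (by omega) (by omega)
        (by simpa [hqa] using hrise)
    have hlt : q ia < q (i + 1) :=
      hchain.strictAntiOn_s12 (Set.mem_Iic.2 (by omega)) (Set.mem_Iic.2 hia) hi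
    rw [hz, hqa] at hlt
    exact hlt.not_ge (mod_cast ((hint z).mp hzI).2)
  · intro i hi hin
    by_contra! hle
    have hfall := antitoneOn_Iic_of_monotoneOn_sub (f := fun j ↦ ((q j).den : ℤ)) hconvex hin
      (mod_cast hle) (Set.mem_Iic.2 (by omega)) (Set.mem_Iic.2 (by omega)) hi.le
    obtain ⟨z, hz, hzI⟩ :=
      hchain.exists_eq_intCast_of_den_le_one (j := i) (by omega) hin
        (by simpa [hq0] using hfall)
    have hlt : q i < q i0 := hchain.strictAntiOn_s12 (Set.mem_Iic.2 hi0) (Set.mem_Iic.2 hin.le) hi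
    rw [hz, hq0] at hlt
    exact hlt.not_ge (mod_cast ((hint z).mp hzI).1)

/-- Structure statement (4.2) in Remark 4.7 of the paper: if
`(t', t) ∩ ℤ = {N, …, N + a}` is nonempty, then every one of these integers
occurs as a term of the minimal unimodular chain from `t` to `t'`, the
denominators strictly decrease up to the term equal to `N + a` and strictly
increase from the term equal to `N` onwards. -/
theorem stmt_12 (t t' : ℚ) (htt : t' < t)
    (N : ℤ) (a : ℕ)
    (hint : ∀ z : ℤ, (t' < (z : ℚ) ∧ (z : ℚ) < t) ↔ (N ≤ z ∧ z ≤ N + a))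
    (q : ℕ → ℚ) (n : ℕ) (hq : IsMinimalUnimodChain q n t t') :
    (∀ j : ℤ, N ≤ j → j ≤ N + a → ∃ i ≤ n, q i = (j : ℚ)) ∧
    (∀ ia i0, ia ≤ n → i0 ≤ n →
      q ia = ((N + (a : ℤ) : ℤ) : ℚ) → q i0 = ((N : ℤ) : ℚ) →
      (∀ i, i + 1 < ia → (q (i + 1)).den < (q i).den) ∧
      (∀ i, i0 < i → i < n → (q i).den < (q (i + 1)).den)) :=
  stmt_12_general t t' N a hint q n hq
end
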